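/- Let c₁, c₂, c₃, c₄ be distinct nonzero reals, and define b_i(0) = [−c_j c_k c_l /2 + 2(c_j c_k + c_j c_l + c_k c_l)/6 − 6(c_j + c_k + c_l)/24 + 24/120] / [c_i (c_i − c_j)(c_i − c_k)(c_i − c_l)] (where {j,k,l} = {1,2,3,4}\{i}). Then Σ_{i=1}^{4} b_i(0) c_i^5/5! = 1/6! holds if and only if (1/5)(c₁+c₂+c₃+c₄) − (1/4)Σ_{i≠j} c_i c_j + (1/3)Σ_{i≠j≠k} c_i c_j c_k − (1/2)c₁c₂c₃c₄ = 1/6. -/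
import Mathlib
set_option maxHeartbeats 1000000

/-- The weight `b_i(0)` of (4.3) evaluated at `z = 0`, using `φ_q(0) = 1/q!`. -/
noncomputable def weight0 (ci cj ck cl : ℝ) : ℝ :=
  (-(cj * ck * cl) / 2 + 2 * (cj * ck + cj * cl + ck * cl) / 6
    - 6 * (cj + ck + cl) / 24 + 24 / 120) /
  (ci * (ci - cj) * (ci - ck) * (ci - cl))

theorem weakened_condition_iff_node_constraint (c1 c2 c3 c4 : ℝ)
    (hc1 : c1 ≠ 0) (hc2 : c2 ≠ 0) (hc3 : c3 ≠ 0) (hc4 : c4 ≠ 0)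
    (h12 : c1 ≠ c2) (h13 : c1 ≠ c3) (h14 : c1 ≠ c4)
    (h23 : c2 ≠ c3) (h24 : c2 ≠ c4) (h34 : c3 ≠ c4) :
    (weight0 c1 c2 c3 c4 * c1 ^ 5 / 120
      + weight0 c2 c1 c3 c4 * c2 ^ 5 / 120
      + weight0 c3 c1 c2 c4 * c3 ^ 5 / 120
      + weight0 c4 c1 c2 c3 * c4 ^ 5 / 120 = 1 / 720)
    ↔ (1 / 5) * (c1 + c2 + c3 + c4)
      - (1 / 4) * (c1 * c2 + c1 * c3 + c1 * c4 + c2 * c3 + c2 * c4 + c3 * c4)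
      + (1 / 3) * (c1 * c2 * c3 + c1 * c2 * c4 + c1 * c3 * c4 + c2 * c3 * c4)
      - (1 / 2) * (c1 * c2 * c3 * c4) = 1 / 6 := by
  have d12 : c1 - c2 ≠ 0 := sub_ne_zero.mpr h12
  have d13 : c1 - c3 ≠ 0 := sub_ne_zero.mpr h13
  have d14 : c1 - c4 ≠ 0 := sub_ne_zero.mpr h14
  have d23 : c2 - c3 ≠ 0 := sub_ne_zero.mpr h23
  have d24 : c2 - c4 ≠ 0 := sub_ne_zero.mpr h24
  have d34 : c3 - c4 ≠ 0 := sub_ne_zero.mpr h34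
  have w1 : weight0 c1 c2 c3 c4 * (c1 * (c1 - c2) * (c1 - c3) * (c1 - c4))
      = -(c2 * c3 * c4) / 2 + 2 * (c2 * c3 + c2 * c4 + c3 * c4) / 6
        - 6 * (c2 + c3 + c4) / 24 + 24 / 120 :=
    div_mul_cancel₀ _ (by
      exact mul_ne_zero (mul_ne_zero (mul_ne_zero hc1 d12) d13) d14)
  have w2 : weight0 c2 c1 c3 c4 * (c2 * (c2 - c1) * (c2 - c3) * (c2 - c4))
      = -(c1 * c3 * c4) / 2 + 2 * (c1 * c3 + c1 * c4 + c3 * c4) / 6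
        - 6 * (c1 + c3 + c4) / 24 + 24 / 120 :=
    div_mul_cancel₀ _ (by
      exact mul_ne_zero (mul_ne_zero (mul_ne_zero hc2 (sub_ne_zero.mpr h12.symm)) d23) d24)
  have w3 : weight0 c3 c1 c2 c4 * (c3 * (c3 - c1) * (c3 - c2) * (c3 - c4))
      = -(c1 * c2 * c4) / 2 + 2 * (c1 * c2 + c1 * c4 + c2 * c4) / 6
        - 6 * (c1 + c2 + c4) / 24 + 24 / 120 :=
    div_mul_cancel₀ _ (by
      exact mul_ne_zero (mul_ne_zero (mul_ne_zero hc3 (sub_ne_zero.mpr h13.symm))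
        (sub_ne_zero.mpr h23.symm)) d34)
  have w4 : weight0 c4 c1 c2 c3 * (c4 * (c4 - c1) * (c4 - c2) * (c4 - c3))
      = -(c1 * c2 * c3) / 2 + 2 * (c1 * c2 + c1 * c3 + c2 * c3) / 6
        - 6 * (c1 + c2 + c3) / 24 + 24 / 120 :=
    div_mul_cancel₀ _ (by
      exact mul_ne_zero (mul_ne_zero (mul_ne_zero hc4 (sub_ne_zero.mpr h14.symm))
        (sub_ne_zero.mpr h24.symm)) (sub_ne_zero.mpr h34.symm))
  have hD : c1 * c2 * c3 * c4 * (c1 - c2) * (c1 - c3) * (c1 - c4) * (c2 - c3)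
      * (c2 - c4) * (c3 - c4) ≠ 0 := by
    exact mul_ne_zero (mul_ne_zero (mul_ne_zero (mul_ne_zero (mul_ne_zero
      (mul_ne_zero (mul_ne_zero (mul_ne_zero (mul_ne_zero hc1 hc2) hc3) hc4)
      d12) d13) d14) d23) d24) d34
  have key : weight0 c1 c2 c3 c4 * c1 ^ 5 / 120
      + weight0 c2 c1 c3 c4 * c2 ^ 5 / 120
      + weight0 c3 c1 c2 c4 * c3 ^ 5 / 120
      + weight0 c4 c1 c2 c3 * c4 ^ 5 / 120 - 1 / 720
      = (1 / 120) * ((1 / 5) * (c1 + c2 + c3 + c4)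
      - (1 / 4) * (c1 * c2 + c1 * c3 + c1 * c4 + c2 * c3 + c2 * c4 + c3 * c4)
      + (1 / 3) * (c1 * c2 * c3 + c1 * c2 * c4 + c1 * c3 * c4 + c2 * c3 * c4)
      - (1 / 2) * (c1 * c2 * c3 * c4) - 1 / 6) := by
    apply mul_right_cancel₀ hD
    linear_combination
      (c1 ^ 5 / 120 * (c2 * c3 * c4 * (c2 - c3) * (c2 - c4) * (c3 - c4))) * w1
      - (c2 ^ 5 / 120 * (c1 * c3 * c4 * (c1 - c3) * (c1 - c4) * (c3 - c4))) * w2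
      + (c3 ^ 5 / 120 * (c1 * c2 * c4 * (c1 - c2) * (c1 - c4) * (c2 - c4))) * w3
      - (c4 ^ 5 / 120 * (c1 * c2 * c3 * (c1 - c2) * (c1 - c3) * (c2 - c3))) * w4
  constructor <;> intro h <;> nlinarith [key]
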